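/- arXiv:1908.11661 — 3 statements merged into one kernel-verified Lean document; each statement's English description precedes it below -/
import Mathlib

section
/- Let S : ℝ≥0 → ℝ be the solution of the scalar ODE dS/dt = -σ·γ(S(t)) with S(0) = V₀ ≥ 0, where σ ∈ (0,1) and γ is a class-K function (continuous, strictly increasing, γ(0)=0). If C₁, C₂ ≥ 0 satisfy C₁ ≤ C₂ - r·σ·γ(C₂) for some r ≥ 0, and C₂ ≤ S(s) for some s ≥ 0, then C₁ ≤ S(s + r). -/
/-- Proposition 3: comparison for the worst-case convergence envelope. -/
theorem stmt_0 (σ V₀ : ℝ) (hσ : 0 < σ) (hσ1 : σ < 1) (hV₀ : 0 ≤ V₀)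
    (γ : ℝ → ℝ) (hγc : ContinuousOn γ (Set.Ici 0))
    (hγm : StrictMonoOn γ (Set.Ici 0)) (hγ0 : γ 0 = 0)
    (hγnn : ∀ v, 0 ≤ v → 0 ≤ γ v)
    (S : ℝ → ℝ) (hS0 : S 0 = V₀)
    (hSnn : ∀ t, 0 ≤ t → 0 ≤ S t)
    (hS : ∀ t, 0 ≤ t → HasDerivAt S (-σ * γ (S t)) t)
    (C₁ C₂ r s : ℝ) (hC₁ : 0 ≤ C₁) (hC₂ : 0 ≤ C₂) (hr : 0 ≤ r) (hs : 0 ≤ s)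
    (h₁ : C₁ ≤ C₂ - r * σ * γ C₂) (h₂ : C₂ ≤ S s) :
    C₁ ≤ S (s + r) := by
  have hγC₂ : 0 ≤ γ C₂ := hγnn C₂ hC₂
  -- S is antitone on [0, ∞)
  have hScont : ContinuousOn S (Set.Ici 0) := fun t ht =>
    (hS t ht).continuousAt.continuousWithinAt
  have hAnti : AntitoneOn S (Set.Ici 0) := by
    apply antitoneOn_of_hasDerivWithinAt_nonpos (convex_Ici 0) hScont
      (f' := fun t => -σ * γ (S t))
    · intro x hx
      rw [interior_Ici] at hx
      exact (hS x hx.le).hasDerivWithinAt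
    · intro x hx
      rw [interior_Ici] at hx
      have := hγnn (S x) (hSnn x hx.le)
      nlinarith
  by_cases hcase : C₂ ≤ S (s + r)
  · nlinarith [mul_nonneg (mul_nonneg hr hσ.le) hγC₂]
  push_neg at hcase
  -- find T ∈ [s, s+r] with S T = C₂
  have hssr : s ≤ s + r := by linarith
  have hIcc : Set.Icc s (s + r) ⊆ Set.Ici 0 := fun x hx => le_trans hs hx.1
  have hivt := intermediate_value_Icc' hssr (hScont.mono hIcc)
  obtain ⟨T, hT, hST⟩ := hivt ⟨hcase.le, h₂⟩
  have hT0 : (0:ℝ) ≤ T := le_trans hs hT.1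
  -- the function g t = S t + σ * γ C₂ * t is monotone on [T, s+r]
  have hmono : MonotoneOn (fun t => S t + σ * γ C₂ * t) (Set.Icc T (s + r)) := by
    apply monotoneOn_of_hasDerivWithinAt_nonneg (convex_Icc T (s + r))
      (f' := fun t => -σ * γ (S t) + σ * γ C₂)
    · intro t ht
      have ht0 : (0:ℝ) ≤ t := le_trans hT0 ht.1
      exact ((hS t ht0).continuousAt.continuousWithinAt).add
        ((continuous_const.mul continuous_id).continuousOn t ht)
    · intro x hx
      rw [interior_Icc] at hx
      have hx0 : (0:ℝ) ≤ x := le_trans hT0 hx.1.le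
      have : HasDerivAt (fun t => S t + σ * γ C₂ * t) (-σ * γ (S x) + σ * γ C₂ * 1) x :=
        (hS x hx0).add ((hasDerivAt_id x).const_mul (σ * γ C₂))
      simpa using this.hasDerivWithinAt
    · intro x hx
      rw [interior_Icc] at hx
      have hx0 : (0:ℝ) ≤ x := le_trans hT0 hx.1.le
      have hSxC₂ : S x ≤ C₂ := by
        rw [← hST]
        exact hAnti (Set.mem_Ici.2 hT0) (Set.mem_Ici.2 hx0) hx.1.le
      have hγle : γ (S x) ≤ γ C₂ :=
        hγm.monotoneOn (Set.mem_Ici.2 (hSnn x hx0)) (Set.mem_Ici.2 hC₂) hSxC₂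
      nlinarith
  have hkey := hmono (Set.left_mem_Icc.2 hT.2) (Set.right_mem_Icc.2 hT.2) hT.2
  simp only [hST] at hkey
  have hσγ : 0 ≤ σ * γ C₂ := mul_nonneg hσ.le hγC₂
  nlinarith [hT.1]
end

section
/- Let V : ℝ≥0 → ℝ≥0 and suppose there is a strictly increasing sequence (τ_k) with τ₀ = 0, uniform bounds 0 < η₁ ≤ τ_{k+1} - τ_k ≤ η₂ for all k, and a class-K function γ₂ such that (V(τ_{k+1}) - V(τ_k))/(τ_{k+1} - τ_k) ≤ -γ₂(V(τ_k)) for all k. Then the sequence V(τ_k) is nonincreasing and V(τ_k) → 0 as k → ∞. -/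
/-- Discrete-time convergence core of the non-monotonic Lyapunov result. -/
theorem stmt_8 (V : ℝ → ℝ) (hVnn : ∀ t, 0 ≤ V t)
    (τ : ℕ → ℝ) (hτmono : StrictMono τ) (hτ0 : τ 0 = 0)
    (η₁ η₂ : ℝ) (hη₁ : 0 < η₁)
    (hgap : ∀ k, η₁ ≤ τ (k+1) - τ k ∧ τ (k+1) - τ k ≤ η₂)
    (γ₂ : ℝ → ℝ) (hγc : ContinuousOn γ₂ (Set.Ici 0))
    (hγm : StrictMonoOn γ₂ (Set.Ici 0)) (hγ0 : γ₂ 0 = 0)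
    (hdec : ∀ k, (V (τ (k+1)) - V (τ k)) / (τ (k+1) - τ k) ≤ -γ₂ (V (τ k))) :
    (∀ k, V (τ (k+1)) ≤ V (τ k)) ∧
      Filter.Tendsto (fun k => V (τ k)) Filter.atTop (nhds 0) := by
  set a : ℕ → ℝ := fun k => V (τ k) with ha
  have hann : ∀ k, 0 ≤ a k := fun k => hVnn _
  have hγnn : ∀ x, 0 ≤ x → 0 ≤ γ₂ x := by
    intro x hx
    have := hγm.monotoneOn (Set.self_mem_Ici) hx hx
    simpa [hγ0] using this
  have key : ∀ k, a (k+1) ≤ a k - η₁ * γ₂ (a k) := by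
    intro k
    have hd : 0 < τ (k+1) - τ k := lt_of_lt_of_le hη₁ (hgap k).1
    have h1 : a (k+1) - a k ≤ (τ (k+1) - τ k) * (-γ₂ (a k)) := by
      have := (div_le_iff₀' hd).mp (hdec k)
      simpa using this
    have h2 : (τ (k+1) - τ k) * (-γ₂ (a k)) ≤ η₁ * (-γ₂ (a k)) := by
      rcases le_or_gt 0 (γ₂ (a k)) with hg | hg
      · exact mul_le_mul_of_nonpos_right (hgap k).1 (by linarith)
      · exact absurd hg (not_lt.mpr (hγnn _ (hann k)))
    nlinarith
  have hantistep : ∀ k, a (k+1) ≤ a k := by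
    intro k
    have := key k
    have := mul_nonneg hη₁.le (hγnn _ (hann k))
    linarith
  refine ⟨hantistep, ?_⟩
  have hanti : Antitone a := antitone_nat_of_succ_le hantistep
  have hbdd : BddBelow (Set.range a) := ⟨0, by rintro x ⟨k, rfl⟩; exact hann k⟩
  set L := ⨅ k, a k with hL
  have htend : Filter.Tendsto a Filter.atTop (nhds L) :=
    tendsto_atTop_ciInf hanti hbdd
  have hLnn : 0 ≤ L := le_ciInf hann
  have hLle : ∀ k, L ≤ a k := fun k => ciInf_le hbdd k
  have hL0 : L = 0 := by
    by_contra h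
    have hLpos : 0 < L := lt_of_le_of_ne hLnn (Ne.symm h)
    have hγL : 0 < γ₂ L := by
      have := hγm Set.self_mem_Ici (le_of_lt hLpos) hLpos
      simpa [hγ0] using this
    set c := η₁ * γ₂ L with hc
    have hcpos : 0 < c := mul_pos hη₁ hγL
    have step : ∀ k, a (k+1) ≤ a k - c := by
      intro k
      have hmono : γ₂ L ≤ γ₂ (a k) :=
        hγm.monotoneOn (le_of_lt hLpos) (hann k) (hLle k)
      have := key k
      nlinarith
    have hiter : ∀ n, a n ≤ a 0 - n * c := by
      intro n
      induction n with
      | zero => simp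
      | succ n ih =>
        have := step n
        push_cast
        linarith
    obtain ⟨n, hn⟩ := exists_nat_gt (a 0 / c)
    have : a 0 < n * c := (div_lt_iff₀ hcpos).mp hn
    have := hiter n
    have := hann n
    linarith
  rw [← hL0]
  exact htend
end

section
/- Let γ be class K and σ ∈ (0,1). Suppose (V_k)_{k∈ℕ} is a sequence in ℝ≥0 and (t_k) a strictly increasing sequence of times with t₀ = 0, such that V_{k+1} ≤ V_k - (t_{k+1} - t_k)·σ·γ(V_k) for all k. Let S solve dS/dt = -σγ(S), S(0) = V₀. Then V_k ≤ S(t_k) for all k ∈ ℕ. -/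
/-- Iterated comparison: sampled Lyapunov values stay below the envelope S. -/
theorem stmt_15 (γ : ℝ → ℝ) (hγc : ContinuousOn γ (Set.Ici 0))
    (hγm : StrictMonoOn γ (Set.Ici 0)) (hγ0 : γ 0 = 0)
    (σ : ℝ) (hσ : 0 < σ) (hσ1 : σ < 1)
    (V : ℕ → ℝ) (hVnn : ∀ k, 0 ≤ V k)
    (t : ℕ → ℝ) (htmono : StrictMono t) (ht0 : t 0 = 0)
    (hdec : ∀ k, V (k+1) ≤ V k - (t (k+1) - t k) * σ * γ (V k))
    (S : ℝ → ℝ) (hS0 : S 0 = V 0)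
    (hSnn : ∀ s, 0 ≤ s → 0 ≤ S s)
    (hS : ∀ s, 0 ≤ s → HasDerivAt S (-σ * γ (S s)) s) :
    ∀ k, V k ≤ S (t k) := by
  have htnn : ∀ k, 0 ≤ t k := fun k => ht0 ▸ htmono.monotone (Nat.zero_le k)
  have hγmono : MonotoneOn γ (Set.Ici 0) := hγm.monotoneOn
  have hγnn : ∀ x, 0 ≤ x → 0 ≤ γ x := by
    intro x hx
    calc (0:ℝ) = γ 0 := hγ0.symm
      _ ≤ γ x := hγmono (by simp) hx hx
  have hScont : ContinuousOn S (Set.Ici 0) :=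
    fun s hs => ((hS s hs).continuousAt).continuousWithinAt
  have hSanti : AntitoneOn S (Set.Ici 0) := by
    apply antitoneOn_of_deriv_nonpos (convex_Ici 0) hScont
    · intro x hx
      rw [interior_Ici] at hx
      exact ((hS x (le_of_lt hx)).differentiableAt).differentiableWithinAt
    · intro x hx
      rw [interior_Ici] at hx
      rw [(hS x hx.le).deriv]
      have h1 := hγnn (S x) (hSnn x hx.le)
      nlinarith
  intro k
  induction k with
  | zero => rw [ht0, hS0]
  | succ k ih =>
    have htk : t k < t (k + 1) := htmono (Nat.lt_succ_self k)
    have hγVk : 0 ≤ γ (V k) := hγnn _ (hVnn k)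
    by_cases hcase : V k ≤ S (t (k + 1))
    · calc V (k + 1) ≤ V k - (t (k + 1) - t k) * σ * γ (V k) := hdec k
        _ ≤ V k := by nlinarith [mul_nonneg (mul_nonneg (sub_nonneg.2 htk.le) hσ.le) hγVk]
        _ ≤ S (t (k + 1)) := hcase
    · push_neg at hcase
      have hsub : Set.Icc (t k) (t (k + 1)) ⊆ Set.Ici (0:ℝ) := by
        intro x hx
        exact le_trans (htnn k) hx.1
      have hIvt : V k ∈ S '' Set.Icc (t k) (t (k + 1)) := by
        apply intermediate_value_Icc' htk.le (hScont.mono hsub)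
        exact ⟨hcase.le, ih⟩
      obtain ⟨c, hc, hSc⟩ := hIvt
      have hc0 : (0:ℝ) ≤ c := le_trans (htnn k) hc.1
      have hg : MonotoneOn (fun s => S s + (σ * γ (V k)) * s)
          (Set.Icc c (t (k + 1))) := by
        apply monotoneOn_of_deriv_nonneg (convex_Icc _ _)
        · apply ContinuousOn.add
          · apply hScont.mono
            intro x hx
            exact le_trans hc0 hx.1
          · exact (continuous_const.mul continuous_id).continuousOn
        · intro x hx
          rw [interior_Icc] at hx
          have hx0 : (0:ℝ) ≤ x := le_trans hc0 hx.1.le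
          exact (((hS x hx0).add (((hasDerivAt_id x).const_mul
            (σ * γ (V k))))).differentiableAt).differentiableWithinAt
        · intro x hx
          rw [interior_Icc] at hx
          have hx0 : (0:ℝ) ≤ x := le_trans hc0 hx.1.le
          have hd := ((hS x hx0).add
            ((hasDerivAt_id x).const_mul (σ * γ (V k)))).deriv
          simp only [id_eq] at hd
          rw [show (fun s => S s + σ * γ (V k) * s) = (S + fun y => σ * γ (V k) * y) from rfl, hd]
          have hSx : S x ≤ V k := by
            rw [← hSc]
            exact hSanti hc0 hx0 hx.1.le
          have hγle : γ (S x) ≤ γ (V k) := hγmono (hSnn x hx0) (hVnn k) hSx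
          nlinarith
      have hkey : S c + (σ * γ (V k)) * c ≤
          S (t (k + 1)) + (σ * γ (V k)) * t (k + 1) :=
        hg ⟨le_refl c, hc.2⟩ ⟨hc.2, le_refl _⟩ hc.2
      rw [hSc] at hkey
      have := hdec k
      nlinarith [mul_le_mul_of_nonneg_left hc.1 (mul_nonneg hσ.le hγVk)]
end
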